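/- Let w ∈ V⁺ be a nonempty finite word with LAR(w) = v_k v_{k−1} ⋯ v_1, and let F ⊆ V. If Score_F(w) = 0, then Acc_F(w) = {v_1, …, v_i} for the maximal i such that {v_1, …, v_i} ⊆ F, and Acc_F(w) = ∅ if no such i exists. -/

import Mathlib

variable {V : Type*}

/-- One step of the score/accumulator update: reading letter `v` after having
score/accumulator pair `s` for the set `F`. -/
def mgStep [DecidableEq V] (F : Finset V) (s : ℕ × Finset V) (v : V) : ℕ × Finset V :=
  if v ∈ F then
    if s.2 = F.erase v then (s.1 + 1, (∅ : Finset V)) else (s.1, insert v s.2)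
  else (0, (∅ : Finset V))

/-- `scoreAcc F w = (Score_F(w), Acc_F(w))` for a (nonempty) finite word `w`. -/
def scoreAcc [DecidableEq V] (F : Finset V) (w : List V) : ℕ × Finset V :=
  w.foldl (mgStep F) (0, ∅)

variable {V : Type*}

/-- One step of the latest-appearance-record update. -/
def larStep [DecidableEq V] (ℓ : List V) (v : V) : List V := ℓ.erase v ++ [v]

/-- The latest appearance record `LAR(w)` of a finite word. -/
def LARof [DecidableEq V] (w : List V) : List V := w.foldl larStep []

/-!
As long as no point has been scored, `Acc_F(w)` is the set of letters of the longest suffix of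
`LAR(w)` lying in `F`: a letter outside `F` empties both, while a letter `v ∈ F` that does not
score is added to the accumulator just as the LAR moves `v` to its end. The suffixes of `LAR(w)`
inside `F` are then exactly the suffixes of that longest one.
-/

namespace List

variable {α : Type*} (p : α → Bool)

theorem le_length_rtakeWhile_iff {l : List α} {i : ℕ} (hi : i ≤ l.length) :
    i ≤ (l.rtakeWhile p).length ↔ ∀ x ∈ l.drop (l.length - i), p x := by
  induction l using List.reverseRecOn generalizing i with
  | nil => simp_all
  | append_singleton m a ih =>
    rcases i with _ | k
    · simp
    have hk : k ≤ m.length := by simpa using hi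
    have hdrop :
        (m ++ [a]).drop ((m ++ [a]).length - (k + 1)) = m.drop (m.length - k) ++ [a] := by
      rw [drop_append_of_le_length (by simp)]
      simp
    rw [hdrop, rtakeWhile_concat]
    by_cases ha : p a
    · simp [ha, ih hk, or_imp, forall_and]
    · simp [ha]

theorem insert_toFinset_rtakeWhile_erase [DecidableEq α] {v : α} (hv : p v) (l : List α) :
    insert v ((l.erase v).rtakeWhile p).toFinset = insert v (l.rtakeWhile p).toFinset := by
  induction l using List.reverseRecOn with
  | nil => simp
  | append_singleton m a ih =>
    by_cases hvm : v ∈ m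
    · rw [erase_append_left _ hvm, rtakeWhile_concat, rtakeWhile_concat]
      split_ifs
      · rw [toFinset_append, toFinset_append, ← Finset.insert_union, ih, Finset.insert_union]
      · rfl
    · rw [erase_append_right _ hvm]
      by_cases hav : a = v
      · subst hav
        simp [rtakeWhile_concat_pos _ _ _ hv]
      · simp [erase_of_not_mem (by simpa [eq_comm] using hav : v ∉ [a])]

end List

section

variable [DecidableEq V]

theorem scoreAcc_append_singleton (F : Finset V) (u : List V) (v : V) :
    scoreAcc F (u ++ [v]) = mgStep F (scoreAcc F u) v := by
  simp [scoreAcc]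

theorem LARof_append_singleton (u : List V) (v : V) :
    LARof (u ++ [v]) = (LARof u).erase v ++ [v] := by
  simp [LARof, larStep]

theorem acc_eq_rtakeWhile_of_score_eq_zero (F : Finset V) (w : List V)
    (h0 : (scoreAcc F w).1 = 0) :
    (scoreAcc F w).2 = ((LARof w).rtakeWhile (· ∈ F)).toFinset := by
  induction w using List.reverseRecOn with
  | nil => simp [scoreAcc, LARof]
  | append_singleton u v ih =>
    rw [scoreAcc_append_singleton] at h0 ⊢
    rw [LARof_append_singleton]
    by_cases hv : v ∈ F
    · by_cases hA : (scoreAcc F u).2 = F.erase v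
      · simp [mgStep, hv, hA] at h0
      · simp only [mgStep, hv, hA, if_true, if_false] at h0 ⊢
        rw [List.rtakeWhile_concat_pos _ _ _ (by simpa using hv), ih h0,
          ← List.insert_toFinset_rtakeWhile_erase _ (by simpa using hv)]
        ext x
        simp
    · simp [mgStep, hv]

end

theorem acc_of_score_zero_general [DecidableEq V] (w : List V) (F : Finset V)
    (h0 : (scoreAcc F w).1 = 0) :
    ((∃ i, 1 ≤ i ∧ i ≤ (LARof w).length ∧
        ((LARof w).drop ((LARof w).length - i)).toFinset ⊆ F) →
      ∃ i, 1 ≤ i ∧ i ≤ (LARof w).length ∧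
        ((LARof w).drop ((LARof w).length - i)).toFinset ⊆ F ∧
        (∀ j, 1 ≤ j → j ≤ (LARof w).length →
          ((LARof w).drop ((LARof w).length - j)).toFinset ⊆ F → j ≤ i) ∧
        (scoreAcc F w).2 = ((LARof w).drop ((LARof w).length - i)).toFinset) ∧
    ((¬∃ i, 1 ≤ i ∧ i ≤ (LARof w).length ∧
        ((LARof w).drop ((LARof w).length - i)).toFinset ⊆ F) →
      (scoreAcc F w).2 = ∅) := by
  set ℓ := LARof w
  set s := ℓ.rtakeWhile (· ∈ F)
  have hsuf : s <:+ ℓ := List.rtakeWhile_suffix _ _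
  have hacc : (scoreAcc F w).2 = s.toFinset := acc_eq_rtakeWhile_of_score_eq_zero F w h0
  have hsℓ : s.length ≤ ℓ.length := hsuf.length_le
  have hdrop : ℓ.drop (ℓ.length - s.length) = s :=
    (List.suffix_iff_eq_drop.mp hsuf).symm
  have hsuffix : ∀ i ≤ ℓ.length, (ℓ.drop (ℓ.length - i)).toFinset ⊆ F ↔ i ≤ s.length := by
    intro i hi
    rw [List.le_length_rtakeWhile_iff _ hi]
    simp [Finset.subset_iff]
  have hsF : (ℓ.drop (ℓ.length - s.length)).toFinset ⊆ F := (hsuffix _ hsℓ).mpr le_rfl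
  constructor
  · rintro ⟨i, hi1, hiℓ, hiF⟩
    refine ⟨s.length, hi1.trans ((hsuffix i hiℓ).mp hiF), hsℓ, hsF,
      fun j _ hjℓ hjF => (hsuffix j hjℓ).mp hjF, by rw [hacc, hdrop]⟩
  · intro hnone
    rw [hacc, List.toFinset_eq_empty_iff, ← List.length_eq_zero_iff]
    by_contra hpos
    exact hnone ⟨s.length, Nat.one_le_iff_ne_zero.mpr hpos, hsℓ, hsF⟩

/-- If `LAR(w) = v_k ⋯ v_1` and `Score_F(w) = 0`, then
`Acc_F(w) = {v_1, …, v_i}` for the maximal `i` with `{v_1, …, v_i} ⊆ F`, and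
`Acc_F(w) = ∅` if no such `i` exists. -/
theorem acc_of_score_zero [DecidableEq V] (w : List V) (hw : w ≠ []) (F : Finset V)
    (h0 : (scoreAcc F w).1 = 0) :
    ((∃ i, 1 ≤ i ∧ i ≤ (LARof w).length ∧
        ((LARof w).drop ((LARof w).length - i)).toFinset ⊆ F) →
      ∃ i, 1 ≤ i ∧ i ≤ (LARof w).length ∧
        ((LARof w).drop ((LARof w).length - i)).toFinset ⊆ F ∧
        (∀ j, 1 ≤ j → j ≤ (LARof w).length →
          ((LARof w).drop ((LARof w).length - j)).toFinset ⊆ F → j ≤ i) ∧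
        (scoreAcc F w).2 = ((LARof w).drop ((LARof w).length - i)).toFinset) ∧
    ((¬∃ i, 1 ≤ i ∧ i ≤ (LARof w).length ∧
        ((LARof w).drop ((LARof w).length - i)).toFinset ⊆ F) →
      (scoreAcc F w).2 = ∅) :=
  acc_of_score_zero_general w F h0
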